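/- arXiv:1307.6344 — 3 statements merged into one kernel-verified Lean document; each statement's English description precedes it below -/
import Mathlib

section
/- Let X be a Poisson random variable with parameter λ and let Y = X(X-1)/2. For every m ≥ 1, the falling factorial moment E[(Y)_m] = E[Y(Y-1)⋯(Y-m+1)] is a polynomial in λ of degree 2m. -/
/-!
For `X ~ Po(λ)` the factorial moments are `E[(X)_j] = λ ^ j`. Hence `q ↦ E[q(X)]` sends the
falling-factorial basis `(x)_j` of `ℝ[x]` to the monomials `λ ^ j`, so it maps every polynomial
to a polynomial in `λ` of the same degree. Apply this to `q(x) = (x(x-1)/2)_m`, of degree `2m`.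
-/

open Polynomial Nat

theorem degree_descPochhammer (R : Type*) [Ring R] [NoZeroDivisors R] [Nontrivial R] (n : ℕ) :
    (descPochhammer R n).degree = n := by
  rw [degree_eq_natDegree (monic_descPochhammer R n).ne_zero, descPochhammer_natDegree]

theorem hasSum_poisson_mul_descFactorial (lam : ℝ) (j : ℕ) :
    HasSum (fun k : ℕ => Real.exp (-lam) * lam ^ k / k ! * (k.descFactorial j : ℝ)) (lam ^ j) := by
  have h_shift : ∀ n : ℕ, Real.exp (-lam) * lam ^ (n + j) / (n + j)! * ((n + j).descFactorial j : ℝ)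
      = Real.exp (-lam) * lam ^ j * (lam ^ n / n !) := by
    intro n
    have h_fact : ((n + j)! : ℝ) = n ! * ((n + j).descFactorial j : ℝ) := by
      rw [← Nat.cast_mul, ← factorial_mul_descFactorial (Nat.le_add_left j n), Nat.add_sub_cancel]
    have : ((n + j).descFactorial j : ℝ) ≠ 0 :=
      Nat.cast_ne_zero.2 (descFactorial_eq_zero_iff_lt.not.2 (by omega))
    rw [h_fact, pow_add]
    field_simp
  have h_vanish : ∀ k ∉ Set.range (· + j), Real.exp (-lam) * lam ^ k / k ! *
      (k.descFactorial j : ℝ) = 0 := by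
    intro k hk
    have : k < j := by
      by_contra! h
      exact hk ⟨k - j, Nat.sub_add_cancel h⟩
    simp [descFactorial_eq_zero_iff_lt.2 this]
  rw [← (add_left_injective j).hasSum_iff h_vanish]
  have h_exp := (NormedSpace.expSeries_div_hasSum_exp lam).mul_left (Real.exp (-lam) * lam ^ j)
  rw [← Real.exp_eq_exp_ℝ, mul_right_comm, ← Real.exp_add, neg_add_cancel, Real.exp_zero,
    one_mul] at h_exp
  simpa [Function.comp_def, h_shift] using h_exp

theorem exists_degree_eq_hasSum_poisson_mul_eval (q : ℝ[X]) :
    ∃ p : ℝ[X], p.degree = q.degree ∧ ∀ lam : ℝ,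
      HasSum (fun k : ℕ => Real.exp (-lam) * lam ^ k / k ! * q.eval (k : ℝ)) (p.eval lam) := by
  induction q using degree_lt_wf.induction with
  | _ q ih =>
    by_cases hq : q = 0
    · exact ⟨0, by rw [hq], fun lam => by simp [hq]⟩
    set n := q.natDegree
    set a := q.leadingCoeff
    have ha : a ≠ 0 := leadingCoeff_ne_zero.2 hq
    have h_top_deg : (C a * descPochhammer ℝ n).degree = q.degree := by
      rw [degree_C_mul ha, degree_descPochhammer, degree_eq_natDegree hq]
    have h_top_lead : (C a * descPochhammer ℝ n).leadingCoeff = a := by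
      rw [leadingCoeff_mul, leadingCoeff_C, (monic_descPochhammer ℝ n).leadingCoeff, mul_one]
    have h_rest_lt := degree_sub_lt_left h_top_deg.symm hq h_top_lead.symm
    obtain ⟨r, hr_deg, hr_sum⟩ := ih _ h_rest_lt
    have hr_lt : r.degree < (C a * X ^ n).degree := by
      rwa [hr_deg, degree_C_mul_X_pow n ha, ← degree_eq_natDegree hq]
    refine ⟨C a * X ^ n + r, ?_, fun lam => ?_⟩
    · rw [degree_add_eq_left_of_degree_lt hr_lt, degree_C_mul_X_pow n ha, degree_eq_natDegree hq]
    · have h_split : (fun k : ℕ => Real.exp (-lam) * lam ^ k / k ! * q.eval (k : ℝ)) = fun k =>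
          a * (Real.exp (-lam) * lam ^ k / k ! * (k.descFactorial n : ℝ)) +
            Real.exp (-lam) * lam ^ k / k ! * (q - C a * descPochhammer ℝ n).eval (k : ℝ) := by
        ext k
        rw [eval_sub, eval_mul, eval_C, descPochhammer_eval_eq_descFactorial]
        ring
      rw [h_split, eval_add, eval_mul, eval_C, eval_X_pow]
      exact ((hasSum_poisson_mul_descFactorial lam n).mul_left a).add (hr_sum lam)

theorem poisson_choose_two_factorial_moment_polynomial_general (m : ℕ) :
    ∃ p : Polynomial ℝ, p.degree = (2 * m : ℕ) ∧
      ∀ lam : ℝ, 0 ≤ lam →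
        ∑' k : ℕ, (Real.exp (-lam) * lam ^ k / (Nat.factorial k)) *
            ((Nat.descFactorial (Nat.choose k 2) m : ℝ))
          = p.eval lam := by
  let chooseTwo : ℝ[X] := C 2⁻¹ * (X * (X - 1))
  have h_deg : chooseTwo.degree = 2 := by
    simp only [chooseTwo]
    compute_degree!
  have h_eval (k : ℕ) : chooseTwo.eval (k : ℝ) = (k.choose 2 : ℝ) := by
    simp only [chooseTwo, eval_mul, eval_C, eval_X, eval_sub, eval_one, Nat.cast_choose_two]
    ring
  obtain ⟨p, hp_deg, hp_sum⟩ :=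
    exists_degree_eq_hasSum_poisson_mul_eval ((descPochhammer ℝ m).comp chooseTwo)
  refine ⟨p, ?_, fun lam _ => ?_⟩
  · rw [hp_deg, degree_comp (by rw [h_deg]; norm_num), h_deg, degree_descPochhammer]
    norm_cast
    ring
  · simpa only [eval_comp, h_eval, descPochhammer_eval_eq_descFactorial] using (hp_sum lam).tsum_eq

/-- Let `X ~ Po(λ)` and `Y = binom(X,2)`. For every `m ≥ 1`, the falling factorial moment
`E[(Y)_m]` is a polynomial in `λ` of degree `2m`. -/
theorem poisson_choose_two_factorial_moment_polynomial (m : ℕ) (hm : 1 ≤ m) :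
    ∃ p : Polynomial ℝ, p.degree = (2 * m : ℕ) ∧
      ∀ lam : ℝ, 0 ≤ lam →
        ∑' k : ℕ, (Real.exp (-lam) * lam ^ k / (Nat.factorial k)) *
            ((Nat.descFactorial (Nat.choose k 2) m : ℝ))
          = p.eval lam :=
  poisson_choose_two_factorial_moment_polynomial_general m
end

section
/- Let X ~ Po(λ) and Y = binom(X,2). For every m ≥ 1 and 0 ≤ λ ≤ 1, E[(Y)_m] ≤ C_m λ² for some constant C_m depending only on m. -/
lemma choose_two_le_two_pow (k : ℕ) : Nat.choose k 2 ≤ 2 ^ k := by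
  rcases lt_or_ge k 2 with hk | hk
  · simp [Nat.choose_eq_zero_of_lt hk]
  · calc Nat.choose k 2 ≤ ∑ i ∈ Finset.range (k + 1), Nat.choose k i :=
        Finset.single_le_sum (fun _ _ => Nat.zero_le _) (Finset.mem_range.mpr (by omega))
      _ = 2 ^ k := Nat.sum_range_choose k

/-- Let `X ~ Po(λ)` and `Y = binom(X,2)`. For every `m ≥ 1` and `0 ≤ λ ≤ 1`,
`E[(Y)_m] ≤ C_m λ²` for some constant `C_m` depending only on `m`. -/
theorem poisson_choose_two_factorial_moment_quadratic (m : ℕ) (hm : 1 ≤ m) :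
    ∃ C : ℝ, ∀ lam : ℝ, 0 ≤ lam → lam ≤ 1 →
      ∑' k : ℕ, (Real.exp (-lam) * lam ^ k / (Nat.factorial k)) *
          ((Nat.descFactorial (Nat.choose k 2) m : ℝ))
        ≤ C * lam ^ 2 := by
  set f : ℕ → ℝ := fun k => (Nat.descFactorial (Nat.choose k 2) m : ℝ) / k.factorial with hf
  have hdle : ∀ k : ℕ, (Nat.descFactorial (Nat.choose k 2) m : ℝ) ≤ ((2:ℝ) ^ m) ^ k := by
    intro k
    have h1 : Nat.descFactorial (Nat.choose k 2) m ≤ (Nat.choose k 2) ^ m :=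
      Nat.descFactorial_le_pow _ _
    have h2 : Nat.choose k 2 ≤ 2 ^ k := choose_two_le_two_pow k
    have : Nat.descFactorial (Nat.choose k 2) m ≤ (2 ^ m) ^ k := by
      calc Nat.descFactorial (Nat.choose k 2) m ≤ (Nat.choose k 2) ^ m := h1
        _ ≤ (2 ^ k) ^ m := Nat.pow_le_pow_left h2 m
        _ = (2 ^ m) ^ k := by rw [← pow_mul, ← pow_mul, Nat.mul_comm]
    calc (Nat.descFactorial (Nat.choose k 2) m : ℝ) ≤ ((2 ^ m) ^ k : ℕ) := by exact_mod_cast this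
      _ = ((2:ℝ) ^ m) ^ k := by push_cast; ring
  have hfs : Summable f := by
    apply Summable.of_nonneg_of_le (fun k => by positivity)
      (fun k => div_le_div_of_nonneg_right (hdle k) (by positivity))
      (Real.summable_pow_div_factorial ((2:ℝ) ^ m))
  refine ⟨∑' k, f k, fun lam h0 h1 => ?_⟩
  have hterm : ∀ k : ℕ,
      (Real.exp (-lam) * lam ^ k / (Nat.factorial k)) *
        ((Nat.descFactorial (Nat.choose k 2) m : ℝ)) ≤ lam ^ 2 * f k := by
    intro k
    rcases lt_or_ge k 2 with hk | hk
    · have hc : Nat.choose k 2 = 0 := Nat.choose_eq_zero_of_lt hk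
      obtain ⟨n, rfl⟩ : ∃ n, m = n + 1 := ⟨m - 1, (Nat.succ_pred_eq_of_pos hm).symm⟩
      simp [hc, hf]
    · have hexp : Real.exp (-lam) ≤ 1 := Real.exp_le_one_iff.mpr (by linarith)
      have hpow : lam ^ k ≤ lam ^ 2 := pow_le_pow_of_le_one h0 h1 hk
      have hnn : (0:ℝ) ≤ (Nat.descFactorial (Nat.choose k 2) m : ℝ) := by positivity
      have : Real.exp (-lam) * lam ^ k ≤ lam ^ 2 := by
        calc Real.exp (-lam) * lam ^ k ≤ 1 * lam ^ 2 := by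
              apply mul_le_mul hexp hpow (by positivity) (by norm_num)
          _ = lam ^ 2 := one_mul _
      have hfac : (0:ℝ) < (Nat.factorial k : ℝ) := by positivity
      rw [hf]
      rw [div_mul_eq_mul_div, mul_comm (lam ^ 2), div_mul_eq_mul_div]
      apply div_le_div_of_nonneg_right _ hfac.le
      calc Real.exp (-lam) * lam ^ k * (Nat.descFactorial (Nat.choose k 2) m : ℝ)
          ≤ lam ^ 2 * (Nat.descFactorial (Nat.choose k 2) m : ℝ) :=
            mul_le_mul_of_nonneg_right this hnn
        _ = (Nat.descFactorial (Nat.choose k 2) m : ℝ) * lam ^ 2 := mul_comm _ _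
  have hsum1 : Summable fun k : ℕ =>
      (Real.exp (-lam) * lam ^ k / (Nat.factorial k)) *
        ((Nat.descFactorial (Nat.choose k 2) m : ℝ)) := by
    apply Summable.of_nonneg_of_le (fun k => by positivity) hterm
    exact hfs.mul_left _
  calc (∑' k : ℕ, (Real.exp (-lam) * lam ^ k / (Nat.factorial k)) *
          ((Nat.descFactorial (Nat.choose k 2) m : ℝ)))
      ≤ ∑' k, lam ^ 2 * f k := Summable.tsum_le_tsum hterm hsum1 (hfs.mul_left _)
    _ = lam ^ 2 * ∑' k, f k := tsum_mul_left
    _ = (∑' k, f k) * lam ^ 2 := mul_comm _ _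
end

section
/- In the configuration model, for any fixed ℓ ≥ 1 and any vertex i with degree d_i ≥ 2ℓ, the ℓ-th falling factorial moment of the number of loops X_i at vertex i equals (d_i)_{2ℓ} / (2^ℓ (N−1)(N−3)⋯(N−2ℓ+1)), where (d_i)_{2ℓ} = d_i(d_i−1)⋯(d_i−2ℓ+1). -/
set_option maxHeartbeats 1000000

abbrev PFI (α : Type*) := {f : α → α // (∀ x, f (f x) = x) ∧ ∀ x, f x ≠ x}

section
variable {α β : Type*} [Fintype α] [DecidableEq α] [Fintype β] [DecidableEq β]

def pfiCongr (e : α ≃ β) : PFI α ≃ PFI β where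
  toFun f := ⟨fun b => e (f.1 (e.symm b)), fun b => by simp [f.2.1], fun b h => f.2.2 (e.symm b) (by
    have := congrArg e.symm h; simpa using this)⟩
  invFun f := ⟨fun a => e.symm (f.1 (e a)), fun a => by simp [f.2.1], fun a h => f.2.2 (e a) (by
    have := congrArg e h; simpa using this)⟩
  left_inv f := by ext x; simp
  right_inv f := by ext x; simp

lemma card_pfi_congr (h : Fintype.card α = Fintype.card β) :
    Fintype.card (PFI α) = Fintype.card (PFI β) :=
  Fintype.card_congr (pfiCongr (Fintype.equivOfCardEq h))

def pfiRestrict (T : Finset α) (p : α → α) (hmem : ∀ x ∈ T, p x ∈ T)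
    (hinv : ∀ x ∈ T, p (p x) = x) (hne : ∀ x ∈ T, p x ≠ x) :
    {f : PFI α // ∀ x ∈ T, f.1 x = p x} ≃ PFI {x : α // x ∉ T} where
  toFun f := ⟨fun x => ⟨f.1.1 x.1, fun hf => by
      have : x.1 = p (f.1.1 x.1) := by
        rw [← f.2 _ hf]; exact (f.1.2.1 x.1).symm
      exact x.2 (this ▸ hmem _ hf)⟩,
    fun x => Subtype.ext (f.1.2.1 x.1), fun x h => f.1.2.2 x.1 (congrArg Subtype.val h)⟩
  invFun g := ⟨⟨fun x => if hx : x ∈ T then p x else (g.1 ⟨x, hx⟩).1, by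
      constructor
      · intro x
        by_cases hx : x ∈ T
        · simp only [dif_pos hx, dif_pos (hmem _ hx), hinv _ hx]
        · simp only [dif_neg hx, dif_neg (g.1 ⟨x, hx⟩).2]
          exact congrArg Subtype.val (g.2.1 ⟨x, hx⟩)
      · intro x
        by_cases hx : x ∈ T
        · simp only [dif_pos hx]; exact hne _ hx
        · simp only [dif_neg hx]
          exact fun h => g.2.2 ⟨x, hx⟩ (Subtype.ext h)⟩,
    fun x hx => dif_pos hx⟩
  left_inv f := by
    apply Subtype.ext; apply Subtype.ext; funext x
    by_cases hx : x ∈ T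
    · simp only [dif_pos hx]; exact (f.2 _ hx).symm
    · simp only [dif_neg hx]
  right_inv g := by
    refine Subtype.ext (funext fun x => Subtype.ext ?_)
    show (if hx : x.1 ∈ T then p x.1 else (g.1 ⟨x.1, hx⟩).1) = (g.1 x).1
    rw [dif_neg x.2]

def Ifpf (m : ℕ) : ℕ := Fintype.card (PFI (Fin m))

lemma card_pfi_eq {m : ℕ} (h : Fintype.card α = m) : Fintype.card (PFI α) = Ifpf m :=
  Fintype.card_congr (pfiCongr (Fintype.equivOfCardEq (by simp [h])))
end
lemma Ifpf_pos (m : ℕ) : 0 < Ifpf (2 * m) := by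
  have h := card_pfi_eq (α := Fin m × Bool) (m := 2 * m) (by simp [two_mul, mul_comm])
  rw [← h]
  exact Fintype.card_pos_iff.2 ⟨⟨fun p => (p.1, !p.2), fun p => by simp,
    fun p h => by simpa using congrArg Prod.snd h⟩⟩

lemma card_fix (m : ℕ) (b : Fin (m + 2)) (hb : b ≠ 0) :
    Fintype.card {f : PFI (Fin (m + 2)) // f.1 0 = b} = Ifpf m := by
  classical
  set a : Fin (m + 2) := 0 with ha
  have e1 : {f : PFI (Fin (m + 2)) // f.1 a = b} ≃
      {f : PFI (Fin (m + 2)) // ∀ x ∈ ({a, b} : Finset (Fin (m + 2))), f.1 x = Equiv.swap a b x} := by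
    refine Equiv.subtypeEquivRight fun f => ⟨fun h x hx => ?_, fun h => ?_⟩
    · rcases Finset.mem_insert.1 hx with rfl | hx
      · rw [h, Equiv.swap_apply_left]
      · rw [Finset.mem_singleton.1 hx, Equiv.swap_apply_right, ← h, f.2.1]
    · have := h a (Finset.mem_insert_self a _)
      rwa [Equiv.swap_apply_left] at this
  have e2 := pfiRestrict ({a, b} : Finset (Fin (m + 2))) (Equiv.swap a b)
    (fun x hx => by
      rcases Finset.mem_insert.1 hx with rfl | hx
      · rw [Equiv.swap_apply_left]; exact Finset.mem_insert_of_mem (Finset.mem_singleton_self b)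
      · rw [Finset.mem_singleton.1 hx, Equiv.swap_apply_right]
        exact Finset.mem_insert_self a _)
    (fun x _ => Equiv.swap_apply_self a b x)
    (fun x hx => by
      rcases Finset.mem_insert.1 hx with rfl | hx
      · rw [Equiv.swap_apply_left]; exact hb
      · rw [Finset.mem_singleton.1 hx, Equiv.swap_apply_right]; exact fun h => hb h.symm)
  rw [Fintype.card_congr (e1.trans e2)]
  apply card_pfi_eq
  have h2 : Fintype.card {x : Fin (m + 2) // x ∈ ({a, b} : Finset (Fin (m + 2)))} = 2 := by
    rw [Fintype.card_coe]
    exact Finset.card_pair (fun h => hb h.symm)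
  rw [Fintype.card_subtype_compl, h2, Fintype.card_fin]
  omega

lemma card_indep {γ : Type*} (h1 h2 : Fintype γ) :
    @Fintype.card γ h1 = @Fintype.card γ h2 := by
  congr 1; exact Subsingleton.elim h1 h2

lemma Ifpf_succ (m : ℕ) : Ifpf (m + 2) = (m + 1) * Ifpf m := by
  have hcard : Ifpf (m + 2) = Fintype.card (PFI (Fin (m + 2))) :=
    ((card_pfi_eq (α := Fin (m + 2)) (Fintype.card_fin _)).symm).trans (card_indep _ _)
  have hsum : Fintype.card (PFI (Fin (m + 2)))
      = ∑ b : Fin (m + 2), (Finset.univ.filter fun f : PFI (Fin (m + 2)) => f.1 0 = b).card := by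
    rw [← Finset.card_univ]
    exact Finset.card_eq_sum_card_fiberwise (fun f _ => Finset.mem_univ (f.1 0))
  have hterm : ∀ b : Fin (m + 2),
      (Finset.univ.filter fun f : PFI (Fin (m + 2)) => f.1 0 = b).card
        = if b = 0 then 0 else Ifpf m := by
    intro b
    rw [← Fintype.card_subtype]
    by_cases hb : b = 0
    · subst hb
      rw [if_pos rfl]
      haveI : IsEmpty {f : PFI (Fin (m + 2)) // f.1 0 = 0} := ⟨fun f => f.1.2.2 0 f.2⟩
      exact Fintype.card_eq_zero
    · rw [if_neg hb]
      exact (card_indep _ _).trans (card_fix m b hb)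
  rw [hcard, hsum]
  simp only [hterm]
  rw [← Finset.sum_erase (a := (0 : Fin (m + 2)))
    (f := fun b : Fin (m + 2) => if b = 0 then 0 else Ifpf m) Finset.univ (if_pos rfl)]
  rw [Finset.sum_congr rfl (fun b hb => if_neg (Finset.ne_of_mem_erase hb)),
    Finset.sum_const, Finset.card_erase_of_mem (Finset.mem_univ _), Finset.card_univ,
    Fintype.card_fin, smul_eq_mul, show m + 2 - 1 = m + 1 by omega]

lemma Ifpf_prod : ∀ l N : ℕ, 2 * l ≤ N →
    Ifpf N = Ifpf (N - 2 * l) * ∏ k ∈ Finset.range l, (N - (2 * k + 1)) := by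
  intro l
  induction l with
  | zero => intro N _; simp
  | succ l ih =>
    intro N hN
    obtain ⟨M, rfl⟩ : ∃ M, N = M + 2 := ⟨N - 2, by omega⟩
    have hM : 2 * l ≤ M := by omega
    have hprod : ∏ k ∈ Finset.range (l + 1), (M + 2 - (2 * k + 1))
        = (∏ k ∈ Finset.range l, (M - (2 * k + 1))) * (M + 1) := by
      rw [Finset.prod_range_succ']
      congr 1
      exact Finset.prod_congr rfl fun k _ => by omega
    rw [Ifpf_succ, ih M hM, hprod, show M + 2 - 2 * (l + 1) = M - 2 * l by omega]
    ring

section Main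
variable {n N : ℕ} (v : Fin N → Fin n) (i : Fin n) {l : ℕ}

/-- endpoints function of a tuple of pairs -/
def cw (w : Fin l → Fin N × Fin N) : Fin l × Bool → Fin N :=
  fun q => if q.2 then (w q.1).1 else (w q.1).2

def GoodW (w : Fin l → Fin N × Fin N) : Prop :=
  (∀ k, v (w k).1 = i ∧ v (w k).2 = i ∧ (w k).1 < (w k).2) ∧ Function.Injective (cw w)

def DP (f : PFI (Fin N)) (w : Fin l → Fin N × Fin N) : Prop :=
  (∀ k, v (w k).1 = i ∧ v (w k).2 = i ∧ (w k).1 < (w k).2 ∧ f.1 (w k).1 = (w k).2)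
    ∧ Function.Injective (fun k => (w k).1)

instance : DecidablePred (GoodW v i (l := l)) := fun _ => by unfold GoodW; infer_instance
instance (f : PFI (Fin N)) : DecidablePred (DP v i f (l := l)) := fun _ => by
  unfold DP; infer_instance

lemma step1 (f : PFI (Fin N)) :
    ((Finset.univ.filter (fun a : Fin N => v a = i ∧ v (f.1 a) = i ∧ a < f.1 a)).card).descFactorial l
      = (Finset.univ.filter (fun w : Fin l → Fin N × Fin N => DP v i f w)).card := by
  set P := Finset.univ.filter (fun a : Fin N => v a = i ∧ v (f.1 a) = i ∧ a < f.1 a) with hP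
  have e : {w : Fin l → Fin N × Fin N // DP v i f w} ≃ (Fin l ↪ {a : Fin N // a ∈ P}) := by
    refine ⟨fun w => ⟨fun k => ⟨(w.1 k).1, ?_⟩, fun k k' h => w.2.2 (congrArg Subtype.val h)⟩,
      fun e => ⟨fun k => ((e k).1, f.1 (e k).1), ⟨fun k => ?_, fun k k' h => ?_⟩⟩, fun w => ?_, fun e => ?_⟩
    · obtain ⟨h1, h2, h3, h4⟩ := w.2.1 k
      rw [hP, Finset.mem_filter]
      exact ⟨Finset.mem_univ _, h1, by rw [h4]; exact ⟨h2, h3⟩⟩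
    · have h5 := Finset.mem_filter.1 (show (e k).1 ∈ Finset.univ.filter (fun a : Fin N => v a = i ∧ v (f.1 a) = i ∧ a < f.1 a) from (e k).2)
      exact ⟨h5.2.1, h5.2.2.1, h5.2.2.2, rfl⟩
    · exact e.injective (Subtype.ext h)
    · apply Subtype.ext; funext k
      have h4 := (w.2.1 k).2.2.2
      exact Prod.ext rfl h4
    · ext k
      rfl
  have h1 : (Finset.univ.filter (fun w : Fin l → Fin N × Fin N => DP v i f w)).card
      = Fintype.card {w : Fin l → Fin N × Fin N // DP v i f w} :=
    ((card_indep _ _).trans (Fintype.card_subtype _)).symm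
  rw [h1, Fintype.card_congr e, Fintype.card_embedding_eq, Fintype.card_fin, Fintype.card_coe]

lemma step2 :
    ∑ f : PFI (Fin N), (Finset.univ.filter (fun w : Fin l → Fin N × Fin N => DP v i f w)).card
      = ∑ w : Fin l → Fin N × Fin N,
          (Finset.univ.filter (fun f : PFI (Fin N) => DP v i f w)).card := by
  simp only [Finset.card_filter]
  exact Finset.sum_comm

lemma dp_good (f : PFI (Fin N)) (w : Fin l → Fin N × Fin N) (hD : DP v i f w) :
    GoodW v i w := by
  have hab : ∀ k, f.1 (w k).1 = (w k).2 := fun k => (hD.1 k).2.2.2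
  have hba : ∀ k, f.1 (w k).2 = (w k).1 := fun k => by rw [← hab k, f.2.1]
  have hlt : ∀ k, (w k).1 < (w k).2 := fun k => (hD.1 k).2.2.1
  refine ⟨fun k => ⟨(hD.1 k).1, (hD.1 k).2.1, hlt k⟩, ?_⟩
  rintro ⟨k, t⟩ ⟨k', t'⟩ h
  have hcw : ∀ (k : Fin l) (t : Bool), cw w (k, t) = if t then (w k).1 else (w k).2 :=
    fun _ _ => rfl
  rw [hcw, hcw] at h
  cases t <;> cases t' <;> simp only [ite_true, ite_false, Bool.false_eq_true] at h
  · -- h : (w k).2 = (w k').2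
    have := hD.2 (show (w k).1 = (w k').1 by rw [← hba k, ← hba k', h])
    subst this; rfl
  · -- h : (w k).2 = (w k').1
    exfalso
    have h2 : (w k').2 = (w k).1 := by rw [← hab k', ← h, hba k]
    have l1 := hlt k
    have l2 := hlt k'
    rw [h] at l1
    rw [h2] at l2
    exact lt_asymm l1 l2
  · -- h : (w k).1 = (w k').2
    exfalso
    have h2 : (w k).2 = (w k').1 := by rw [← hab k, h, hba k']
    have l1 := hlt k
    have l2 := hlt k'
    rw [h, h2] at l1
    exact lt_asymm l1 l2
  · have := hD.2 h
    subst this; rfl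

lemma step3 (w : Fin l → Fin N × Fin N) :
    (Finset.univ.filter (fun f : PFI (Fin N) => DP v i f w)).card
      = if GoodW v i w then Ifpf (N - 2 * l) else 0 := by
  by_cases hg : GoodW v i w
  · rw [if_pos hg]
    classical
    set T : Finset (Fin N) := Finset.image (cw w) Finset.univ with hT
    set p : Fin N → Fin N := fun x =>
      if h : ∃ q : Fin l × Bool, cw w q = x then cw w ((h.choose).1, !(h.choose).2) else x with hp'
    have hp : ∀ q : Fin l × Bool, p (cw w q) = cw w (q.1, !q.2) := by
      intro q
      have hex : ∃ q' : Fin l × Bool, cw w q' = cw w q := ⟨q, rfl⟩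
      have hch : hex.choose = q := hg.2 hex.choose_spec
      rw [hp']
      simp only [dif_pos hex, hch]
    have hmemT : ∀ q : Fin l × Bool, cw w q ∈ T :=
      fun q => Finset.mem_image.2 ⟨q, Finset.mem_univ _, rfl⟩
    have hflip : ∀ t : Bool, (!t) ≠ t := by decide
    have hiff : ∀ f : PFI (Fin N), DP v i f w ↔ ∀ x ∈ T, f.1 x = p x := by
      intro f
      constructor
      · intro hD x hx
        obtain ⟨q, -, rfl⟩ := Finset.mem_image.1 hx
        rw [hp]
        obtain ⟨k, t⟩ := q
        cases t
        · show f.1 (w k).2 = (w k).1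
          rw [← (hD.1 k).2.2.2, f.2.1]
        · show f.1 (w k).1 = (w k).2
          exact (hD.1 k).2.2.2
      · intro hP
        refine ⟨fun k => ⟨(hg.1 k).1, (hg.1 k).2.1, (hg.1 k).2.2, ?_⟩, ?_⟩
        · have := hP (cw w (k, true)) (hmemT _)
          rw [hp] at this
          exact this
        · intro k k' h
          have := hg.2 (show cw w (k, true) = cw w (k', true) from h)
          exact (Prod.ext_iff.1 this).1
    have e2 := pfiRestrict T p
      (fun x hx => by
        obtain ⟨q, -, rfl⟩ := Finset.mem_image.1 hx
        rw [hp]; exact hmemT _)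
      (fun x hx => by
        obtain ⟨q, -, rfl⟩ := Finset.mem_image.1 hx
        rw [hp, hp, Bool.not_not])
      (fun x hx => by
        obtain ⟨q, -, rfl⟩ := Finset.mem_image.1 hx
        rw [hp]
        intro h
        exact hflip q.2 (Prod.ext_iff.1 (hg.2 h)).2)
    have hcards : Fintype.card {x : Fin N // x ∉ T} = N - 2 * l := by
      rw [Fintype.card_subtype_compl, Fintype.card_fin]
      have : Fintype.card {x : Fin N // x ∈ T} = 2 * l := by
        rw [Fintype.card_coe, hT, Finset.card_image_of_injective _ hg.2,
          Finset.card_univ, Fintype.card_prod, Fintype.card_fin, Fintype.card_bool]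
        ring
      rw [this]
    calc (Finset.univ.filter (fun f : PFI (Fin N) => DP v i f w)).card
        = Fintype.card {f : PFI (Fin N) // DP v i f w} :=
          ((card_indep _ _).trans (Fintype.card_subtype _)).symm
      _ = Fintype.card {f : PFI (Fin N) // ∀ x ∈ T, f.1 x = p x} :=
          Fintype.card_congr (Equiv.subtypeEquivRight hiff)
      _ = Fintype.card (PFI {x : Fin N // x ∉ T}) := Fintype.card_congr e2
      _ = Ifpf (N - 2 * l) := card_pfi_eq hcards
  · rw [if_neg hg, Finset.card_eq_zero, Finset.filter_eq_empty_iff]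
    exact fun f _ hD => hg (dp_good v i f w hD)

lemma beq_cancel : ∀ t t' b : Bool, (t == b) = (t' == b) → t = t' := by decide
lemma beq_beq : ∀ t b : Bool, ((t == b) == b) = t := by decide

lemma huni (e : Fin l × Bool ↪ {x : Fin N // v x = i}) (k : Fin l) (t : Bool) :
    cw (fun k => if (e (k, true)).1 < (e (k, false)).1
        then ((e (k, true)).1, (e (k, false)).1)
        else ((e (k, false)).1, (e (k, true)).1)) (k, t)
      = (e (k, t == decide ((e (k, true)).1 < (e (k, false)).1))).1 := by
  by_cases hlt : (e (k, true)).1 < (e (k, false)).1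
  · rw [decide_eq_true hlt]
    cases t
    · show (if (e (k, true)).1 < (e (k, false)).1
        then ((e (k, true)).1, (e (k, false)).1)
        else ((e (k, false)).1, (e (k, true)).1)).2 = _
      rw [if_pos hlt]; rfl
    · show (if (e (k, true)).1 < (e (k, false)).1
        then ((e (k, true)).1, (e (k, false)).1)
        else ((e (k, false)).1, (e (k, true)).1)).1 = _
      rw [if_pos hlt]; rfl
  · rw [decide_eq_false hlt]
    cases t
    · show (if (e (k, true)).1 < (e (k, false)).1
        then ((e (k, true)).1, (e (k, false)).1)
        else ((e (k, false)).1, (e (k, true)).1)).2 = _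
      rw [if_neg hlt]; rfl
    · show (if (e (k, true)).1 < (e (k, false)).1
        then ((e (k, true)).1, (e (k, false)).1)
        else ((e (k, false)).1, (e (k, true)).1)).1 = _
      rw [if_neg hlt]; rfl

def goodEquiv : ((Fin l → Bool) × {w : Fin l → Fin N × Fin N // GoodW v i w})
    ≃ (Fin l × Bool ↪ {x : Fin N // v x = i}) where
  toFun p :=
    ⟨fun q => ⟨cw p.2.1 (q.1, q.2 == p.1 q.1), by
      rcases hb : (q.2 == p.1 q.1) with _ | _
      · exact (p.2.2.1 q.1).2.1
      · exact (p.2.2.1 q.1).1⟩, by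
      rintro ⟨k, t⟩ ⟨k', t'⟩ h
      have h2 := p.2.2.2 (congrArg Subtype.val h)
      have hk : k = k' := (Prod.ext_iff.1 h2).1
      subst hk
      exact Prod.ext rfl (beq_cancel _ _ _ (Prod.ext_iff.1 h2).2)⟩
  invFun e :=
    ⟨fun k => decide ((e (k, true)).1 < (e (k, false)).1),
      ⟨fun k => if (e (k, true)).1 < (e (k, false)).1
        then ((e (k, true)).1, (e (k, false)).1)
        else ((e (k, false)).1, (e (k, true)).1), by
      intro k
      by_cases hlt : (e (k, true)).1 < (e (k, false)).1
      · simp only [if_pos hlt]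
        exact ⟨(e (k, true)).2, (e (k, false)).2, hlt⟩
      · simp only [if_neg hlt]
        refine ⟨(e (k, false)).2, (e (k, true)).2, ?_⟩
        refine lt_of_le_of_ne (le_of_not_gt hlt) fun hh => ?_
        have := e.injective (Subtype.ext hh)
        simpa using (Prod.ext_iff.1 this).2, by
      rintro ⟨k, t⟩ ⟨k', t'⟩ h
      rw [huni, huni] at h
      have h2 := e.injective (Subtype.ext h)
      have hk : k = k' := (Prod.ext_iff.1 h2).1
      subst hk
      exact Prod.ext rfl (beq_cancel _ _ _ (Prod.ext_iff.1 h2).2)⟩⟩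
  left_inv := by
    rintro ⟨ε, w, hw⟩
    have hab : ∀ k, (w k).1 < (w k).2 := fun k => (hw.1 k).2.2
    refine Prod.ext (funext fun k => ?_) (Subtype.ext (funext fun k => ?_))
    · show decide (cw w (k, (true == ε k)) < cw w (k, (false == ε k))) = ε k
      rcases hε : ε k
      · show decide ((w k).2 < (w k).1) = false
        exact decide_eq_false (asymm (hab k))
      · show decide ((w k).1 < (w k).2) = true
        exact decide_eq_true (hab k)
    · show (if cw w (k, (true == ε k)) < cw w (k, (false == ε k))
        then (cw w (k, (true == ε k)), cw w (k, (false == ε k)))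
        else (cw w (k, (false == ε k)), cw w (k, (true == ε k)))) = w k
      rcases hε : ε k
      · show (if (w k).2 < (w k).1 then ((w k).2, (w k).1) else ((w k).1, (w k).2)) = w k
        rw [if_neg (asymm (hab k))]
      · show (if (w k).1 < (w k).2 then ((w k).1, (w k).2) else ((w k).2, (w k).1)) = w k
        rw [if_pos (hab k)]
  right_inv := by
    intro e
    refine DFunLike.ext _ _ fun q => Subtype.ext ?_
    obtain ⟨k, t⟩ := q
    show cw (fun k => if (e (k, true)).1 < (e (k, false)).1
        then ((e (k, true)).1, (e (k, false)).1)
        else ((e (k, false)).1, (e (k, true)).1))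
      (k, (t == decide ((e (k, true)).1 < (e (k, false)).1))) = (e (k, t)).1
    rw [huni, beq_beq]

lemma step5 (D : ℕ) (hdD : (Finset.univ.filter (fun a : Fin N => v a = i)).card = D) :
    2 ^ l * (Finset.univ.filter (fun w : Fin l → Fin N × Fin N => GoodW v i w)).card
      = Nat.descFactorial D (2 * l) := by
  have h1 : (Finset.univ.filter (fun w : Fin l → Fin N × Fin N => GoodW v i w)).card
      = Fintype.card {w : Fin l → Fin N × Fin N // GoodW v i w} :=
    ((card_indep _ _).trans (Fintype.card_subtype _)).symm
  have h2 := Fintype.card_congr (goodEquiv v i (l := l))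
  rw [Fintype.card_prod, Fintype.card_embedding_eq] at h2
  have h3 : Fintype.card (Fin l → Bool) = 2 ^ l := by
    rw [Fintype.card_fun, Fintype.card_bool, Fintype.card_fin]
  have h4 : Fintype.card {x : Fin N // v x = i} = D := by
    rw [Fintype.card_subtype]
    rw [← hdD]
  have h5 : Fintype.card (Fin l × Bool) = 2 * l := by
    rw [Fintype.card_prod, Fintype.card_bool, Fintype.card_fin]; ring
  rw [h3, h4, h5] at h2
  rw [h1, h2]

end Main

/-- Configuration model: for `ℓ ≥ 1` and a vertex `i` with `d_i ≥ 2ℓ`, the `ℓ`-th falling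
factorial moment of the number of loops `X_i` at `i` equals
`(d_i)_{2ℓ} / (2^ℓ (N−1)(N−3)⋯(N−2ℓ+1))`. -/
theorem configuration_model_loops_factorial_moment (n N : ℕ) (hN : Even N)
    (d : Fin n → ℕ) (v : Fin N → Fin n)
    (hd : ∀ i, (Finset.univ.filter (fun a : Fin N => v a = i)).card = d i)
    (l : ℕ) (hl : 1 ≤ l) (i : Fin n) (hdi : 2 * l ≤ d i) :
    (∑ f : {f : Fin N → Fin N // (∀ x, f (f x) = x) ∧ ∀ x, f x ≠ x},
        ((Nat.descFactorial ((Finset.univ.filter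
          (fun a : Fin N => v a = i ∧ v (f.1 a) = i ∧ a < f.1 a)).card) l : ℝ)))
      / (Fintype.card {f : Fin N → Fin N // (∀ x, f (f x) = x) ∧ ∀ x, f x ≠ x})
    = (Nat.descFactorial (d i) (2 * l) : ℝ)
        / (2 ^ l * ∏ k ∈ Finset.range l, ((N : ℝ) - (2 * k + 1))) := by
  -- basic bounds
  have hdN : d i ≤ N := by
    rw [← hd i]
    exact le_trans (Finset.card_filter_le _ _) (by rw [Finset.card_univ, Fintype.card_fin])
  have hlN : 2 * l ≤ N := le_trans hdi hdN
  obtain ⟨m0, hm0⟩ := hN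
  -- notation
  set G : ℕ := (Finset.univ.filter (fun w : Fin l → Fin N × Fin N => GoodW v i w)).card with hG
  set P : ℕ := ∏ k ∈ Finset.range l, (N - (2 * k + 1)) with hPdef
  have hP_pos : 0 < P := by
    rw [hPdef]
    exact Finset.prod_pos fun k hk => by
      have := Finset.mem_range.1 hk; omega
  have hI'_pos : 0 < Ifpf (N - 2 * l) := by
    have : N - 2 * l = 2 * (m0 - l) := by omega
    rw [this]; exact Ifpf_pos _
  -- numerator
  have hnum : (∑ f : PFI (Fin N),
      Nat.descFactorial ((Finset.univ.filter
        (fun a : Fin N => v a = i ∧ v (f.1 a) = i ∧ a < f.1 a)).card) l)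
      = G * Ifpf (N - 2 * l) := by
    calc (∑ f : PFI (Fin N),
        Nat.descFactorial ((Finset.univ.filter
          (fun a : Fin N => v a = i ∧ v (f.1 a) = i ∧ a < f.1 a)).card) l)
        = ∑ f : PFI (Fin N),
            (Finset.univ.filter (fun w : Fin l → Fin N × Fin N => DP v i f w)).card :=
          Finset.sum_congr rfl fun f _ => step1 v i f
      _ = ∑ w : Fin l → Fin N × Fin N,
            (Finset.univ.filter (fun f : PFI (Fin N) => DP v i f w)).card := step2 v i
      _ = ∑ w : Fin l → Fin N × Fin N, if GoodW v i w then Ifpf (N - 2 * l) else 0 :=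
          Finset.sum_congr rfl fun w _ => step3 v i w
      _ = G * Ifpf (N - 2 * l) := by
          rw [← Finset.sum_filter, Finset.sum_const, smul_eq_mul]
  -- denominator
  have hden : Fintype.card (PFI (Fin N)) = Ifpf (N - 2 * l) * P := by
    rw [(card_indep _ _).trans (card_pfi_eq (α := Fin N) (Fintype.card_fin _)),
      Ifpf_prod l N hlN, hPdef]
  have hdesc : Nat.descFactorial (d i) (2 * l) = 2 ^ l * G := (step5 v i (d i) (hd i)).symm
  have hcastP : ∏ k ∈ Finset.range l, ((N : ℝ) - (2 * k + 1)) = (P : ℝ) := by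
    rw [hPdef, Nat.cast_prod]
    refine Finset.prod_congr rfl fun k hk => ?_
    have h2k : 2 * k + 1 ≤ N := by have := Finset.mem_range.1 hk; omega
    rw [Nat.cast_sub h2k]
    push_cast
    ring
  have hsum_cast : (∑ f : PFI (Fin N),
      ((Nat.descFactorial ((Finset.univ.filter
        (fun a : Fin N => v a = i ∧ v (f.1 a) = i ∧ a < f.1 a)).card) l : ℝ)))
      = ((G * Ifpf (N - 2 * l) : ℕ) : ℝ) := by
    rw [← hnum]
    push_cast
    rfl
  rw [hsum_cast, hden, hdesc, hcastP]
  have hI' : ((Ifpf (N - 2 * l) : ℝ)) ≠ 0 := Nat.cast_ne_zero.2 hI'_pos.ne'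
  have hPne : (P : ℝ) ≠ 0 := Nat.cast_ne_zero.2 hP_pos.ne'
  have h2l : (2 : ℝ) ^ l ≠ 0 := by positivity
  push_cast
  field_simp
end
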